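/- Let G be a connected plane graph with no 3-cycles, no 5-cycles, and no separating 7-cycles, such that δ(G) ≥ 2, the outer face f0 of G is a 7-face, V(f0) is a proper subset of V(G), and every 2-vertex of G lies on f0. If w_1,…,w_m are 2-vertices on f0 with m ≥ 2 and w_i w_{i+1} ∈ E(G) for all i ∈ [m−1], then the face incident with these vertices other than f0 has length at least 6. -/

import Mathlib

open SimpleGraph

/-- A plane (embedded) graph on vertex set `V`: a simple graph together with a
finite set of faces, each given by its (cyclic) boundary walk, a designated
outer face, such that consecutive vertices on a boundary walk are adjacent,
every edge lies on exactly two face incidences (counted with multiplicity),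
and Euler's formula holds when the graph is connected. -/
structure PlaneGraph (V : Type) [Fintype V] [DecidableEq V] where
  graph : SimpleGraph V
  Face : Type
  fintypeFace : Fintype Face
  boundary : Face → List V
  outer : Face
  boundary_adj : ∀ f : Face, ∀ p ∈ (boundary f).zip ((boundary f).rotate 1), graph.Adj p.1 p.2
  edge_twice : ∀ e ∈ graph.edgeSet,
    ((@Finset.univ Face fintypeFace).sum fun f =>
      (((boundary f).zip ((boundary f).rotate 1)).map fun p => s(p.1, p.2)).count e) = 2
  euler : graph.Connected →
    Fintype.card V + @Fintype.card Face fintypeFace = Nat.card graph.edgeSet + 2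

namespace PlaneGraph

variable {V : Type} [Fintype V] [DecidableEq V]

instance (P : PlaneGraph V) : Fintype P.Face := P.fintypeFace

/-- The degree of a vertex. -/
noncomputable def deg (P : PlaneGraph V) (v : V) : ℕ := Nat.card {u : V // P.graph.Adj v u}

/-- The length of (the boundary walk of) a face. -/
def faceLen (P : PlaneGraph V) (f : P.Face) : ℕ := (P.boundary f).length

/-- A vertex is incident with a face if it lies on its boundary walk. -/
def VertexOnFace (P : PlaneGraph V) (v : V) (f : P.Face) : Prop := v ∈ P.boundary f

/-- An edge `ab` is incident with a face if `a` and `b` appear consecutively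
(cyclically) on its boundary walk. -/
def EdgeOnFace (P : PlaneGraph V) (a b : V) (f : P.Face) : Prop :=
  (a, b) ∈ (P.boundary f).zip ((P.boundary f).rotate 1) ∨
  (b, a) ∈ (P.boundary f).zip ((P.boundary f).rotate 1)

/-- Level-1 vertices (relative to the designated set `T`): vertices not in `T`
of degree at most 3. -/
def Level1 (P : PlaneGraph V) (T : Set V) (v : V) : Prop := v ∉ T ∧ P.deg v ≤ 3

/-- Vertices of level at most 2 (relative to `T`): vertices not in `T` having at
most 3 neighbors outside `V₁` (this contains `V₁` itself). -/
noncomputable def LevelLe2 (P : PlaneGraph V) (T : Set V) (v : V) : Prop :=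
  v ∉ T ∧ Nat.card {u : V // P.graph.Adj v u ∧ ¬ P.Level1 T u} ≤ 3

/-- `w` is a good neighbor of `v`: `w` is a neighbor of `v` of level at most 2
such that the face incident with `v` but not with the edge `vw` is a 4-face. -/
def GoodNbr (P : PlaneGraph V) (T : Set V) (v w : V) : Prop :=
  P.graph.Adj v w ∧ P.LevelLe2 T w ∧
  ∃ f : P.Face, P.VertexOnFace v f ∧ ¬ P.EdgeOnFace v w f ∧ P.faceLen f = 4

/-- A good vertex: a 3-vertex incident with three distinct faces having a good
neighbor. -/
def Good (P : PlaneGraph V) (T : Set V) (v : V) : Prop :=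
  P.deg v = 3 ∧
  (∃ f1 f2 f3 : P.Face, f1 ≠ f2 ∧ f1 ≠ f3 ∧ f2 ≠ f3 ∧
    P.VertexOnFace v f1 ∧ P.VertexOnFace v f2 ∧ P.VertexOnFace v f3) ∧
  ∃ w : V, P.GoodNbr T v w

end PlaneGraph

/-- `G` has no cycle of length `k`. -/
def NoCycleLen {V : Type} (G : SimpleGraph V) (k : ℕ) : Prop :=
  ∀ (v : V) (c : G.Walk v v), c.IsCycle → c.length ≠ k

/-- `G` has no separating cycle of length `k`: deleting the vertices of any
`k`-cycle leaves a (pre)connected graph. -/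
def NoSepCycleLen {V : Type} (G : SimpleGraph V) (k : ℕ) : Prop :=
  ∀ (v : V) (c : G.Walk v v), c.IsCycle → c.length = k →
    (G.induce {x | x ∉ c.support}).Preconnected

/-- A proper `k`-coloring of `G`. -/
def IsProperColoring {V : Type} (G : SimpleGraph V) (k : ℕ) (φ : V → Fin k) : Prop :=
  ∀ a b : V, G.Adj a b → φ a ≠ φ b

/-- The graph obtained from `G` by identifying the two (nonadjacent) vertices
`v` and `w`: on the vertex set `V ∖ {w}`, the vertex `v` plays the role of the
identified vertex `v*w`, adjacent to all former neighbors of `v` or of `w`. -/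
def Identify {V : Type} (G : SimpleGraph V) (v w : V) : SimpleGraph {x : V // x ≠ w} where
  Adj a b := (G.Adj a.1 b.1 ∨ (a.1 = v ∧ G.Adj w b.1) ∨ (b.1 = v ∧ G.Adj w a.1)) ∧ a ≠ b
  symm := by
    refine ⟨?_⟩
    rintro a b ⟨h, hne⟩
    refine ⟨?_, Ne.symm hne⟩
    rcases h with h | ⟨h1, h2⟩ | ⟨h1, h2⟩
    · exact Or.inl h.symm
    · exact Or.inr (Or.inr ⟨h1, h2⟩)
    · exact Or.inr (Or.inl ⟨h1, h2⟩)
  loopless := ⟨fun a h => h.2 rfl⟩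

/-- One recoloring step: two colorings differing on exactly one vertex. -/
def RecolorStep {V : Type} {k : ℕ} (φ ψ : V → Fin k) : Prop := ∃! x : V, φ x ≠ ψ x

/-- A valid recoloring sequence for `G`: a list of proper `k`-colorings in which
consecutive colorings differ on exactly one vertex. -/
def RecolorSeq {V : Type} (G : SimpleGraph V) (k : ℕ) (L : List (V → Fin k)) : Prop :=
  (∀ φ ∈ L, IsProperColoring G k φ) ∧ L.Chain' RecolorStep

/-- The number of times the vertex `x` gets recolored along the sequence `L`. -/
def recolorCount {V : Type} {k : ℕ} (L : List (V → Fin k)) (x : V) : ℕ :=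
  (L.zip L.tail).countP fun p => decide (p.1 x ≠ p.2 x)

/-- The reconfiguration graph `C_k(G)`: vertices are the proper `k`-colorings of
`G`, two colorings being adjacent when they differ on exactly one vertex. -/
def ReconfGraph {V : Type} (G : SimpleGraph V) (k : ℕ) :
    SimpleGraph {φ : V → Fin k // IsProperColoring G k φ} where
  Adj φ ψ := ∃! x : V, φ.1 x ≠ ψ.1 x
  symm := by
    refine ⟨?_⟩
    rintro φ ψ ⟨x, hx, hu⟩
    exact ⟨x, Ne.symm hx, fun y hy => hu y (Ne.symm hy)⟩
  loopless := ⟨fun φ ⟨x, hx, _⟩ => hx rfl⟩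

section Helpers
variable {V : Type} {G : SimpleGraph V}

lemma noOdd3 (h3 : NoCycleLen G 3) {a b c : V}
    (hab : G.Adj a b) (hbc : G.Adj b c) (hca : G.Adj c a) : False := by
  refine h3 a (Walk.cons hab (Walk.cons hbc (Walk.cons hca Walk.nil))) ?_ (by simp)
  simp [Walk.isCycle_def, Walk.isTrail_def, Sym2.eq_iff, hab.ne, hbc.ne, hca.ne,
    hab.ne', hbc.ne', hca.ne']

lemma noOdd5 (h3 : NoCycleLen G 3) (h5 : NoCycleLen G 5) {a b c d e : V}
    (hab : G.Adj a b) (hbc : G.Adj b c) (hcd : G.Adj c d) (hde : G.Adj d e)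
    (hea : G.Adj e a) : False := by
  by_cases hac : a = c
  · exact noOdd3 h3 hcd hde (hac ▸ hea)
  by_cases had : a = d
  · exact noOdd3 h3 hab hbc (had ▸ hcd)
  by_cases hbd : b = d
  · exact noOdd3 h3 hde hea (hbd ▸ hab)
  by_cases hbe : b = e
  · exact noOdd3 h3 hbc hcd (hbe ▸ hde)
  by_cases hce : c = e
  · exact noOdd3 h3 hea hab (hce ▸ hbc)
  refine h5 a (Walk.cons hab (Walk.cons hbc (Walk.cons hcd (Walk.cons hde
    (Walk.cons hea Walk.nil))))) ?_ (by simp)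
  simp [Walk.isCycle_def, Walk.isTrail_def, Sym2.eq_iff, hab.ne, hbc.ne, hcd.ne,
    hde.ne, hea.ne, hab.ne', hbc.ne', hcd.ne', hde.ne', hea.ne',
    hac, had, hbd, hbe, hce, Ne.symm hac, Ne.symm had, Ne.symm hbd, Ne.symm hbe, Ne.symm hce]

lemma exists7 {α : Type} (l : List α) (h : l.length = 7) :
    ∃ a b c d e f g, l = [a,b,c,d,e,f,g] := by
  rcases l with _|⟨a,_|⟨b,_|⟨c,_|⟨d,_|⟨e,_|⟨f,_|⟨g,_|⟨h8,t⟩⟩⟩⟩⟩⟩⟩⟩ <;> simp_all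

namespace PlaneGraph
variable {V : Type} [Fintype V] [DecidableEq V] {P : PlaneGraph V}

lemma outerB (h3 : NoCycleLen P.graph 3) (h5 : NoCycleLen P.graph 5)
    (houter : P.faceLen P.outer = 7) :
    ∃ b : Fin 7 → V, P.boundary P.outer = [b 0, b 1, b 2, b 3, b 4, b 5, b 6] ∧
      Function.Injective b ∧ (∀ i : Fin 7, P.graph.Adj (b i) (b (i+1))) ∧
      ((P.boundary P.outer).zip ((P.boundary P.outer).rotate 1)) =
        [(b 0, b 1), (b 1, b 2), (b 2, b 3), (b 3, b 4), (b 4, b 5), (b 5, b 6), (b 6, b 0)] := by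
  obtain ⟨b0, b1, b2, b3, b4, b5, b6, hB⟩ := exists7 _ houter
  have hz : ((P.boundary P.outer).zip ((P.boundary P.outer).rotate 1)) =
      [(b0,b1),(b1,b2),(b2,b3),(b3,b4),(b4,b5),(b5,b6),(b6,b0)] := by
    rw [hB]; simp [List.rotate]
  have hadjz := P.boundary_adj P.outer
  have a01 : P.graph.Adj b0 b1 := hadjz (b0, b1) (by rw [hz]; simp)
  have a12 : P.graph.Adj b1 b2 := hadjz (b1, b2) (by rw [hz]; simp)
  have a23 : P.graph.Adj b2 b3 := hadjz (b2, b3) (by rw [hz]; simp)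
  have a34 : P.graph.Adj b3 b4 := hadjz (b3, b4) (by rw [hz]; simp)
  have a45 : P.graph.Adj b4 b5 := hadjz (b4, b5) (by rw [hz]; simp)
  have a56 : P.graph.Adj b5 b6 := hadjz (b5, b6) (by rw [hz]; simp)
  have a60 : P.graph.Adj b6 b0 := hadjz (b6, b0) (by rw [hz]; simp)
  have n01 : b0 ≠ b1 := (a01).ne
  have m10 : b1 ≠ b0 := Ne.symm n01
  have n02 : b0 ≠ b2 := (fun h => noOdd5 h3 h5 a23 a34 a45 a56 (h ▸ a60))
  have m20 : b2 ≠ b0 := Ne.symm n02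
  have n03 : b0 ≠ b3 := (fun h => noOdd3 h3 a01 a12 (h.symm ▸ a23))
  have m30 : b3 ≠ b0 := Ne.symm n03
  have n04 : b0 ≠ b4 := (fun h => noOdd3 h3 a45 a56 (h ▸ a60))
  have m40 : b4 ≠ b0 := Ne.symm n04
  have n05 : b0 ≠ b5 := (fun h => noOdd5 h3 h5 a01 a12 a23 a34 (h.symm ▸ a45))
  have m50 : b5 ≠ b0 := Ne.symm n05
  have n06 : b0 ≠ b6 := (a60).ne'
  have m60 : b6 ≠ b0 := Ne.symm n06
  have n12 : b1 ≠ b2 := (a12).ne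
  have m21 : b2 ≠ b1 := Ne.symm n12
  have n13 : b1 ≠ b3 := (fun h => noOdd5 h3 h5 a34 a45 a56 a60 (h ▸ a01))
  have m31 : b3 ≠ b1 := Ne.symm n13
  have n14 : b1 ≠ b4 := (fun h => noOdd3 h3 a12 a23 (h.symm ▸ a34))
  have m41 : b4 ≠ b1 := Ne.symm n14
  have n15 : b1 ≠ b5 := (fun h => noOdd3 h3 a56 a60 (h ▸ a01))
  have m51 : b5 ≠ b1 := Ne.symm n15
  have n16 : b1 ≠ b6 := (fun h => noOdd5 h3 h5 a12 a23 a34 a45 (h.symm ▸ a56))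
  have m61 : b6 ≠ b1 := Ne.symm n16
  have n23 : b2 ≠ b3 := (a23).ne
  have m32 : b3 ≠ b2 := Ne.symm n23
  have n24 : b2 ≠ b4 := (fun h => noOdd5 h3 h5 a45 a56 a60 a01 (h ▸ a12))
  have m42 : b4 ≠ b2 := Ne.symm n24
  have n25 : b2 ≠ b5 := (fun h => noOdd3 h3 a23 a34 (h.symm ▸ a45))
  have m52 : b5 ≠ b2 := Ne.symm n25
  have n26 : b2 ≠ b6 := (fun h => noOdd3 h3 a60 a01 (h ▸ a12))
  have m62 : b6 ≠ b2 := Ne.symm n26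
  have n34 : b3 ≠ b4 := (a34).ne
  have m43 : b4 ≠ b3 := Ne.symm n34
  have n35 : b3 ≠ b5 := (fun h => noOdd5 h3 h5 a56 a60 a01 a12 (h ▸ a23))
  have m53 : b5 ≠ b3 := Ne.symm n35
  have n36 : b3 ≠ b6 := (fun h => noOdd3 h3 a34 a45 (h.symm ▸ a56))
  have m63 : b6 ≠ b3 := Ne.symm n36
  have n45 : b4 ≠ b5 := (a45).ne
  have m54 : b5 ≠ b4 := Ne.symm n45
  have n46 : b4 ≠ b6 := (fun h => noOdd5 h3 h5 a60 a01 a12 a23 (h ▸ a34))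
  have m64 : b6 ≠ b4 := Ne.symm n46
  have n56 : b5 ≠ b6 := (a56).ne
  have m65 : b6 ≠ b5 := Ne.symm n56
  refine ⟨![b0,b1,b2,b3,b4,b5,b6], by rw [hB]; rfl, ?_, ?_, by rw [hz]; rfl⟩
  · intro i j hij
    fin_cases i <;> fin_cases j <;> first | rfl | exact absurd hij (by assumption)
  · intro i
    fin_cases i <;> assumption


lemma N2 {v : V} (h : P.deg v = 2) {x y z : V}
    (hx : P.graph.Adj v x) (hy : P.graph.Adj v y) (hz : P.graph.Adj v z) :
    x = y ∨ x = z ∨ y = z := by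
  classical
  by_contra hc
  push_neg at hc
  obtain ⟨hxy, hxz, hyz⟩ := hc
  have hcard : Nat.card {u : V // P.graph.Adj v u} = 2 := h
  rw [Nat.card_eq_fintype_card] at hcard
  have h3 : ({⟨x, hx⟩, ⟨y, hy⟩, ⟨z, hz⟩} : Finset {u : V // P.graph.Adj v u}).card = 3 := by
    rw [Finset.card_insert_of_notMem (by simp [Subtype.ext_iff, hxy, hxz]),
      Finset.card_insert_of_notMem (by simp [Subtype.ext_iff, hyz]),
      Finset.card_singleton]
  have hle := Finset.card_le_univ ({⟨x, hx⟩, ⟨y, hy⟩, ⟨z, hz⟩} : Finset {u : V // P.graph.Adj v u})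
  rw [h3] at hle
  omega

lemma seven (h3 : NoCycleLen P.graph 3) (h5 : NoCycleLen P.graph 5)
    (b : Fin 7 → V) (hb : ∀ i : Fin 7, P.graph.Adj (b i) (b (i+1)))
    (binj : Function.Injective b) (w1 c' d' : V) (hface : P.graph.Adj c' d')
    (hN0 : ∀ x, P.graph.Adj (b 0) x → x = w1 ∨ x = d')
    (hN1 : ∀ x, P.graph.Adj w1 x → x = b 0 ∨ x = c') : False := by
  have hb0 : P.graph.Adj (b 0) (b 1) := hb 0
  have hb1 : P.graph.Adj (b 1) (b 2) := hb 1
  have hb2 : P.graph.Adj (b 2) (b 3) := hb 2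
  have hb3 : P.graph.Adj (b 3) (b 4) := hb 3
  have hb4 : P.graph.Adj (b 4) (b 5) := hb 4
  have hb5 : P.graph.Adj (b 5) (b 6) := hb 5
  have hb6 : P.graph.Adj (b 6) (b 0) := hb 6
  rcases hN0 (b 1) hb0 with h1 | h1
  · rcases hN1 (b 2) (h1 ▸ hb1) with h2 | h2
    · exact binj.ne (show (2 : Fin 7) ≠ 0 by decide) h2
    · rcases hN0 (b 6) hb6.symm with h6 | h6
      · exact binj.ne (show (1 : Fin 7) ≠ 6 by decide) (h1.trans h6.symm)
      · exact noOdd5 h3 h5 hb2 hb3 hb4 hb5 (by rw [h6, h2]; exact hface.symm)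
  · rcases hN0 (b 6) hb6.symm with h6 | h6
    · rcases hN1 (b 5) (h6 ▸ hb5.symm) with h5' | h5'
      · exact binj.ne (show (5 : Fin 7) ≠ 0 by decide) h5'
      · exact noOdd5 h3 h5 hb1 hb2 hb3 hb4 (by rw [h5', h1]; exact hface)
    · exact binj.ne (show (1 : Fin 7) ≠ 6 by decide) (h1.trans h6.symm)

lemma mem_outerB (b : Fin 7 → V) (hB : P.boundary P.outer = [b 0, b 1, b 2, b 3, b 4, b 5, b 6])
    {v : V} (hv : v ∈ P.boundary P.outer) : ∃ i : Fin 7, v = b i := by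
  rw [hB] at hv
  simp only [List.mem_cons, List.not_mem_nil, or_false] at hv
  rcases hv with h|h|h|h|h|h|h
  exacts [⟨0, h⟩, ⟨1, h⟩, ⟨2, h⟩, ⟨3, h⟩, ⟨4, h⟩, ⟨5, h⟩, ⟨6, h⟩]

lemma main4 (h3 : NoCycleLen P.graph 3) (h5 : NoCycleLen P.graph 5)
    (houter : P.faceLen P.outer = 7) {w0 w1 c' d' : V}
    (hd0 : P.deg w0 = 2)
    (hon0 : w0 ∈ P.boundary P.outer)
    (h01 : P.graph.Adj w0 w1) (h1c : P.graph.Adj w1 c')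
    (hcd : P.graph.Adj c' d') (hdw : P.graph.Adj d' w0)
    (hd1 : P.deg w1 = 2)
    (h0c : w0 ≠ c') (h1d : w1 ≠ d') : False := by
  have hN0 : ∀ x, P.graph.Adj w0 x → x = w1 ∨ x = d' := by
    intro x hx
    rcases N2 hd0 hx h01 hdw.symm with h|h|h
    exacts [Or.inl h, Or.inr h, absurd h h1d]
  have hN1 : ∀ x, P.graph.Adj w1 x → x = w0 ∨ x = c' := by
    intro x hx
    rcases N2 hd1 hx h01.symm h1c with h|h|h
    exacts [Or.inl h, Or.inr h, absurd h h0c]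
  obtain ⟨b, hB, binj, hb, hz⟩ := outerB h3 h5 houter
  obtain ⟨i, hi⟩ := mem_outerB b hB hon0
  refine seven h3 h5 (fun j => b (i + j)) (fun j => ?_) ?_ w1 c' d' hcd ?_ ?_
  · show P.graph.Adj (b (i + j)) (b (i + (j + 1)))
    rw [← add_assoc]
    exact hb (i + j)
  · intro x y hxy
    exact add_left_cancel (binj hxy)
  · show ∀ x, P.graph.Adj (b (i + 0)) x → x = w1 ∨ x = d'
    rw [add_zero, ← hi]
    exact hN0
  · show ∀ x, P.graph.Adj w1 x → x = b (i + 0) ∨ x = c'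
    rw [add_zero, ← hi]
    exact hN1

def incList (P : PlaneGraph V) (f : P.Face) : List (Sym2 V) :=
  ((P.boundary f).zip ((P.boundary f).rotate 1)).map fun p => s(p.1, p.2)

lemma edge_on_outer (h3 : NoCycleLen P.graph 3) (h5 : NoCycleLen P.graph 5)
    (houter : P.faceLen P.outer = 7) {v x : V} (hdv : P.deg v = 2)
    (hv : v ∈ P.boundary P.outer) (hx : P.graph.Adj v x) :
    s(v, x) ∈ P.incList P.outer := by
  obtain ⟨b, hB, binj, hb, hz⟩ := outerB h3 h5 houter
  obtain ⟨i, hi⟩ := mem_outerB b hB hv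
  have hmem : ∀ j : Fin 7, (b j, b (j+1)) ∈
      ((P.boundary P.outer).zip ((P.boundary P.outer).rotate 1)) := by
    intro j
    rw [hz]
    fin_cases j <;> simp
  have hp : P.graph.Adj v (b (i+1)) := hi ▸ hb i
  have hq : P.graph.Adj v (b (i-1)) := by
    have h := (hb (i-1)).symm
    rw [sub_add_cancel, ← hi] at h
    exact h
  have hpq : b (i+1) ≠ b (i-1) := by
    intro h
    have h2 := binj h
    have h3 : (1 : Fin 7) = -1 := by
      have := congrArg (fun t => t - i) h2
      simpa [add_comm, add_sub_cancel_right, sub_eq_add_neg] using this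
    exact absurd h3 (by decide)
  rcases N2 hdv hp hq hx with h|h|h
  · exact absurd h hpq
  · refine List.mem_map.mpr ⟨(b i, b (i+1)), hmem i, ?_⟩
    rw [← hi, ← h]
  · refine List.mem_map.mpr ⟨(b (i-1), b ((i-1)+1)), hmem (i-1), ?_⟩
    rw [sub_add_cancel, ← hi, ← h]
    exact Sym2.eq_swap

lemma two_faces_le {e : Sym2 V} (he : e ∈ P.graph.edgeSet) {f g : P.Face} (hfg : f ≠ g) :
    (P.incList f).count e + (P.incList g).count e ≤ 2 := by
  classical
  have h := P.edge_twice e he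
  have h1 : ∑ x ∈ (Finset.univ : Finset P.Face).erase g, (P.incList x).count e
      + (P.incList g).count e
      = ∑ x : P.Face, (P.incList x).count e := Finset.sum_erase_add _ _ (Finset.mem_univ g)
  have h2 : (P.incList f).count e ≤
      ∑ x ∈ (Finset.univ : Finset P.Face).erase g, (P.incList x).count e :=
    Finset.single_le_sum (f := fun x => (P.incList x).count e) (fun _ _ => Nat.zero_le _)
      (by simp [Finset.mem_erase, hfg])
  have h3 : ∑ x : P.Face, (P.incList x).count e = 2 := h
  omega

lemma one_face_le {e : Sym2 V} (he : e ∈ P.graph.edgeSet) (f : P.Face) :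
    (P.incList f).count e ≤ 2 := by
  have h := P.edge_twice e he
  have h2 : (P.incList f).count e ≤ ∑ x : P.Face, (P.incList x).count e :=
    Finset.single_le_sum (f := fun x => (P.incList x).count e) (fun _ _ => Nat.zero_le _)
      (Finset.mem_univ f)
  have h3 : ∑ x : P.Face, (P.incList x).count e = 2 := h
  omega

/-- the key counting contradiction: an edge with two incidences in `f` whose endpoint `v`
is a 2-vertex on the outer face adjacent to `x`. -/
lemma count_contra (h3 : NoCycleLen P.graph 3) (h5 : NoCycleLen P.graph 5)
    (houter : P.faceLen P.outer = 7) {f : P.Face} (hf : f ≠ P.outer) {v x : V}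
    (hdv : P.deg v = 2) (hv : v ∈ P.boundary P.outer) (hx : P.graph.Adj v x)
    (hcount : 2 ≤ (P.incList f).count s(v, x)) : False := by
  have hmem := edge_on_outer h3 h5 houter hdv hv hx
  have h1 : 1 ≤ (P.incList P.outer).count s(v, x) := List.count_pos_iff.mpr hmem
  have h2 := two_faces_le (P := P) (e := s(v, x)) (by exact hx) hf
  omega
end PlaneGraph


end Helpers

open PlaneGraph

/-- **Claim 1.** In a connected plane graph with no 3-cycles, no
5-cycles, no separating 7-cycles, minimum degree at least 2, whose outer face
`f₀` is a 7-face with `V(f₀) ⊊ V(G)` and all 2-vertices on `f₀`: if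
`w 0, …, w (m-1)` (with `m ≥ 2`) are distinct 2-vertices on `f₀` that are
consecutively adjacent, then any face other than `f₀` incident with all of them
has length at least 6. -/

theorem claim_deg2_pair {V : Type} [Fintype V] [DecidableEq V] (P : PlaneGraph V)
    (hconn : P.graph.Connected)
    (h3 : NoCycleLen P.graph 3) (h5 : NoCycleLen P.graph 5)
    (hsep7 : NoSepCycleLen P.graph 7)
    (hmin : ∀ v : V, 2 ≤ P.deg v)
    (houter : P.faceLen P.outer = 7)
    (hproper : ∃ x : V, x ∉ P.boundary P.outer)
    (h2v : ∀ v : V, P.deg v = 2 → v ∈ P.boundary P.outer)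
    (m : ℕ) (hm : 2 ≤ m) (w : Fin m → V) (hinj : Function.Injective w)
    (hdeg : ∀ i : Fin m, P.deg (w i) = 2)
    (hon : ∀ i : Fin m, w i ∈ P.boundary P.outer)
    (hadj : ∀ i j : Fin m, (j : ℕ) = (i : ℕ) + 1 → P.graph.Adj (w i) (w j)) :
    ∀ f : P.Face, f ≠ P.outer → (∀ i : Fin m, P.VertexOnFace (w i) f) →
      6 ≤ P.faceLen f := by
  intro f hf hvf
  by_contra hlen
  push_neg at hlen
  have hm0 : 0 < m := by omega
  have hm1 : 1 < m := by omega
  have haw : P.graph.Adj (w ⟨0, hm0⟩) (w ⟨1, hm1⟩) := hadj _ _ (by simp)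
  have hd0 : P.deg (w ⟨0, hm0⟩) = 2 := hdeg _
  have hd1 : P.deg (w ⟨1, hm1⟩) = 2 := hdeg _
  have hon0 : w ⟨0, hm0⟩ ∈ P.boundary P.outer := hon _
  have hon1 : w ⟨1, hm1⟩ ∈ P.boundary P.outer := hon _
  have hw0f : w ⟨0, hm0⟩ ∈ P.boundary f := hvf _
  have hw1f : w ⟨1, hm1⟩ ∈ P.boundary f := hvf _
  have hlen5 : (P.boundary f).length ≤ 5 := by
    have h6 : P.faceLen f < 6 := hlen
    unfold PlaneGraph.faceLen at h6
    omega
  have hbadj := P.boundary_adj f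
  rcases l : P.boundary f with _ | ⟨a, _ | ⟨b, _ | ⟨c, _ | ⟨d, _ | ⟨e, _ | ⟨x6, t⟩⟩⟩⟩⟩⟩
  · rw [l] at hw0f
    simp at hw0f
  · rw [l] at hw0f hw1f
    simp at hw0f hw1f
    exact haw.ne (hw0f.trans hw1f.symm)
  · -- length 2
    have hz : (P.boundary f).zip ((P.boundary f).rotate 1) = [(a,b),(b,a)] := by
      rw [l]; simp [List.rotate]
    have hab : P.graph.Adj a b := hbadj (a,b) (by rw [hz]; simp)
    have hinc : P.incList f = [s(a,b), s(a,b)] := by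
      rw [PlaneGraph.incList, hz]; simp [Sym2.eq_swap]
    have hcnt : 2 ≤ (P.incList f).count s(a,b) := by rw [hinc]; simp
    rw [l] at hw0f hw1f
    simp only [List.mem_cons, List.not_mem_nil, or_false] at hw0f hw1f
    rcases hw0f with h0 | h0 <;> rcases hw1f with h1 | h1
    · exact haw.ne (h0.trans h1.symm)
    · rw [h0] at hd0 hon0
      exact count_contra h3 h5 houter hf hd0 hon0 hab hcnt
    · rw [h0] at hd0 hon0
      exact count_contra h3 h5 houter hf hd0 hon0 hab.symm
        (by rw [Sym2.eq_swap]; exact hcnt)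
    · exact haw.ne (h0.trans h1.symm)
  · -- length 3
    have hz : (P.boundary f).zip ((P.boundary f).rotate 1) = [(a,b),(b,c),(c,a)] := by
      rw [l]; simp [List.rotate]
    exact noOdd3 h3 (hbadj (a,b) (by rw [hz]; simp)) (hbadj (b,c) (by rw [hz]; simp))
      (hbadj (c,a) (by rw [hz]; simp))
  · -- length 4
    have hz : (P.boundary f).zip ((P.boundary f).rotate 1) = [(a,b),(b,c),(c,d),(d,a)] := by
      rw [l]; simp [List.rotate]
    have hab : P.graph.Adj a b := hbadj (a,b) (by rw [hz]; simp)
    have hbc : P.graph.Adj b c := hbadj (b,c) (by rw [hz]; simp)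
    have hcd : P.graph.Adj c d := hbadj (c,d) (by rw [hz]; simp)
    have hda : P.graph.Adj d a := hbadj (d,a) (by rw [hz]; simp)
    rw [l] at hw0f hw1f
    by_cases hac : a = c
    · subst hac
      by_cases hbd : b = d
      · subst hbd
        have hinc : P.incList f = [s(a,b), s(a,b), s(a,b), s(a,b)] := by
          rw [PlaneGraph.incList, hz]; simp [Sym2.eq_swap]
        have hcnt : (P.incList f).count s(a,b) = 4 := by rw [hinc]; simp
        have hle := one_face_le (P := P) (e := s(a,b)) (by exact hab) f
        omega
      · have hnadb : s(a, d) ≠ s(a, b) := by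
          intro h
          rcases Sym2.eq_iff.mp h with ⟨-, h2⟩ | ⟨h1, -⟩
          exacts [hbd h2.symm, hab.ne h1]
        have hinc : P.incList f = [s(a,b), s(a,b), s(a,d), s(a,d)] := by
          rw [PlaneGraph.incList, hz]; simp [Sym2.eq_swap]
        have hcntb : 2 ≤ (P.incList f).count s(a,b) := by
          rw [hinc]; simp [List.count_cons, hnadb]
        have hcntd : 2 ≤ (P.incList f).count s(a,d) := by
          rw [hinc]; simp [List.count_cons, Ne.symm hnadb]
        simp only [List.mem_cons, List.not_mem_nil, or_false] at hw0f
        rcases hw0f with h0 | h0 | h0 | h0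
        · rw [h0] at hd0 hon0
          exact count_contra h3 h5 houter hf hd0 hon0 hab hcntb
        · rw [h0] at hd0 hon0
          exact count_contra h3 h5 houter hf hd0 hon0 hab.symm
            (by rw [Sym2.eq_swap]; exact hcntb)
        · rw [h0] at hd0 hon0
          exact count_contra h3 h5 houter hf hd0 hon0 hab hcntb
        · rw [h0] at hd0 hon0
          exact count_contra h3 h5 houter hf hd0 hon0 hda
            (by rw [Sym2.eq_swap]; exact hcntd)
    · by_cases hbd : b = d
      · subst hbd
        have hnab : s(a, b) ≠ s(b, c) := by
          intro h
          rcases Sym2.eq_iff.mp h with ⟨h1, -⟩ | ⟨h1, -⟩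
          exacts [hab.ne h1, hac h1]
        have hinc : P.incList f = [s(a,b), s(b,c), s(b,c), s(a,b)] := by
          rw [PlaneGraph.incList, hz]; simp [Sym2.eq_swap]
        have hcntab : 2 ≤ (P.incList f).count s(a,b) := by
          rw [hinc]; simp [List.count_cons, Ne.symm hnab]
        have hcntbc : 2 ≤ (P.incList f).count s(b,c) := by
          rw [hinc]; simp [List.count_cons, hnab]
        simp only [List.mem_cons, List.not_mem_nil, or_false] at hw0f
        rcases hw0f with h0 | h0 | h0 | h0
        · rw [h0] at hd0 hon0
          exact count_contra h3 h5 houter hf hd0 hon0 hab hcntab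
        · rw [h0] at hd0 hon0
          exact count_contra h3 h5 houter hf hd0 hon0 hbc hcntbc
        · rw [h0] at hd0 hon0
          exact count_contra h3 h5 houter hf hd0 hon0 hbc.symm
            (by rw [Sym2.eq_swap]; exact hcntbc)
        · rw [h0] at hd0 hon0
          exact count_contra h3 h5 houter hf hd0 hon0 hab.symm
            (by rw [Sym2.eq_swap]; exact hcntab)
      · -- nondegenerate 4-cycle
        have hca : c ≠ a := fun h => hac h.symm
        have hdb : d ≠ b := fun h => hbd h.symm
        simp only [List.mem_cons, List.not_mem_nil, or_false] at hw0f hw1f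
        rcases hw0f with h0 | h0 | h0 | h0 <;> rcases hw1f with h1 | h1 | h1 | h1 <;>
          rw [h0, h1] at haw <;> rw [h0] at hd0 hon0 <;> rw [h1] at hd1 hon1
        · exact haw.ne rfl
        · exact main4 h3 h5 houter hd0 hon0 haw hbc hcd hda hd1 hac hbd
        · rcases N2 hd0 hab hda.symm haw with h | h | h
          exacts [hbd h, hbc.ne h, hcd.ne' h]
        · exact main4 h3 h5 houter hd0 hon0 haw hcd.symm hbc.symm hab.symm hd1 hac hdb
        · exact main4 h3 h5 houter hd0 hon0 haw hda.symm hcd.symm hbc.symm hd1 hbd hac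
        · exact haw.ne rfl
        · exact main4 h3 h5 houter hd0 hon0 haw hcd hda hab hd1 hbd hca
        · rcases N2 hd0 hab.symm hbc haw with h | h | h
          exacts [hac h, hda.ne' h, hcd.ne h]
        · rcases N2 hd0 hbc.symm hcd haw with h | h | h
          exacts [hbd h, hab.ne' h, hda.ne h]
        · exact main4 h3 h5 houter hd0 hon0 haw hab.symm hda.symm hcd.symm hd1 hca hbd
        · exact haw.ne rfl
        · exact main4 h3 h5 houter hd0 hon0 haw hda hab hbc hd1 hca hdb
        · exact main4 h3 h5 houter hd0 hon0 haw hab hbc hcd hd1 hdb hac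
        · rcases N2 hd0 hcd.symm hda haw with h | h | h
          exacts [hca h, hbc.ne' h, hab.ne h]
        · exact main4 h3 h5 houter hd0 hon0 haw hbc.symm hab.symm hda.symm hd1 hdb hca
        · exact haw.ne rfl
  · -- length 5
    have hz : (P.boundary f).zip ((P.boundary f).rotate 1) =
        [(a,b),(b,c),(c,d),(d,e),(e,a)] := by
      rw [l]; simp [List.rotate]
    exact noOdd5 h3 h5 (hbadj (a,b) (by rw [hz]; simp)) (hbadj (b,c) (by rw [hz]; simp))
      (hbadj (c,d) (by rw [hz]; simp)) (hbadj (d,e) (by rw [hz]; simp))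
      (hbadj (e,a) (by rw [hz]; simp))
  · rw [l] at hlen5
    simp at hlen5
    omega
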